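/- arXiv:1212.1694 — 11 statements merged into one kernel-verified Lean document; each statement's English description precedes it below -/
import Mathlib

section
/- Let ξ : ℝ³ → ℝ be three times continuously differentiable, and let c > 0 and M ≥ 0 be constants such that D²ξ(x)[ζ,ζ] ≥ c|ζ|² for all x, ζ ∈ ℝ³ and |D³ξ(x)[ζ,ζ,ζ]| ≤ M|ζ|³ for all x with ξ(x) ≤ 0 and all ζ ∈ ℝ³. Then for every x, v ∈ ℝ³ and all real numbers s₁ ≤ s₂ such that ξ(x + σ v) ≤ 0 for every σ ∈ [s₁, s₂], one has exp(−(M/c)|v|(s₂−s₁)) · α(x + s₁ v, v) ≤ α(x + s₂ v, v) ≤ exp((M/c)|v|(s₂−s₁)) · α(x + s₁ v, v). -/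
noncomputable section

open Real

/-- Euclidean 3-space. -/
abbrev E3 : Type := EuclideanSpace ℝ (Fin 3)

/-- Kinetic distance toward the grazing set:
`α(x,v) = (∇ξ(x)·v)² − 2 (D²ξ(x)[v,v]) ξ(x)`. -/
def kineticAlpha (ξ : E3 → ℝ) (x v : E3) : ℝ :=
  (fderiv ℝ ξ x v) ^ 2 - 2 * (iteratedFDeriv ℝ 2 ξ x ![v, v]) * ξ x

/-!
Along the line `t ↦ x + t • v` the derivative of `α` is `-2 D³ξ[v,v,v] ξ`: the two terms
involving `D²ξ` cancel. Where `ξ ≤ 0`, convexity gives `α ≥ 2c|v|²(-ξ)`, hence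
`|α'| ≤ 2M|v|³(-ξ) ≤ K α` with `K = (M/c)|v|`, and then `e^{-Kt} α` is antitone and
`e^{Kt} α` is monotone on the segment.
-/

open Set

theorem le_exp_mul_mul_of_hasDerivAt_le_mul {f f' : ℝ → ℝ} {K a b : ℝ} (hab : a ≤ b)
    (hf : ∀ t ∈ Icc a b, HasDerivAt f (f' t) t) (hf' : ∀ t ∈ Icc a b, f' t ≤ K * f t) :
    f b ≤ exp (K * (b - a)) * f a := by
  have hg : ∀ t, HasDerivAt (fun t => exp (-(K * t))) (exp (-(K * t)) * -(K * 1)) t :=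
    fun t => ((hasDerivAt_id t).const_mul K).neg.exp
  have hanti : AntitoneOn (fun t => exp (-(K * t)) * f t) (Icc a b) := by
    refine antitoneOn_of_hasDerivWithinAt_nonpos (convex_Icc a b)
      (fun t ht => ((hg t).mul (hf t ht)).continuousAt.continuousWithinAt)
      (fun t ht => ((hg t).mul (hf t (interior_subset ht))).hasDerivWithinAt) fun t ht => ?_
    have hft := hf' t (interior_subset ht)
    have hexp : 0 < exp (-(K * t)) := exp_pos _
    nlinarith
  have hba := hanti (left_mem_Icc.2 hab) (right_mem_Icc.2 hab) hab
  calc f b = exp (K * b) * (exp (-(K * b)) * f b) := by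
        rw [← mul_assoc, ← exp_add, add_neg_cancel, exp_zero, one_mul]
    _ ≤ exp (K * b) * (exp (-(K * a)) * f a) := mul_le_mul_of_nonneg_left hba (exp_pos _).le
    _ = exp (K * (b - a)) * f a := by rw [← mul_assoc, ← exp_add]; ring_nf

theorem exp_neg_mul_mul_le_and_le_exp_mul_mul_of_abs_hasDerivAt_le {f f' : ℝ → ℝ} {K a b : ℝ}
    (hab : a ≤ b) (hf : ∀ t ∈ Icc a b, HasDerivAt f (f' t) t)
    (hf' : ∀ t ∈ Icc a b, |f' t| ≤ K * f t) :
    exp (-K * (b - a)) * f a ≤ f b ∧ f b ≤ exp (K * (b - a)) * f a := by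
  constructor
  · have hneg := le_exp_mul_mul_of_hasDerivAt_le_mul (f := -f) (K := -K) hab
      (fun t ht => (hf t ht).neg)
      fun t ht => by simpa [neg_le] using (neg_abs_le (f' t)).trans' (neg_le_neg (hf' t ht))
    simpa using hneg
  · exact le_exp_mul_mul_of_hasDerivAt_le_mul hab hf fun t ht => (le_abs_self _).trans (hf' t ht)

theorem hasDerivAt_iteratedFDeriv_apply_const_line {E F : Type*} [NormedAddCommGroup E]
    [NormedSpace ℝ E] [NormedAddCommGroup F] [NormedSpace ℝ F] {f : E → F} {n : ℕ}
    (hf : ContDiff ℝ (n + 1) f) (x v : E) (s : ℝ) :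
    HasDerivAt (fun t : ℝ => iteratedFDeriv ℝ n f (x + t • v) fun _ => v)
      (iteratedFDeriv ℝ (n + 1) f (x + s • v) fun _ => v) s := by
  have hline : HasDerivAt (fun t : ℝ => x + t • v) v s := by
    simpa using ((hasDerivAt_id s).smul_const v).const_add x
  have hD := ((hf.differentiable_iteratedFDeriv (by exact_mod_cast n.lt_succ_self))
    (x + s • v)).hasFDerivAt.comp_hasDerivAt s hline
  exact (ContinuousMultilinearMap.apply ℝ (fun _ => E) F fun _ => v).hasFDerivAt.comp_hasDerivAt
    s hD

theorem hasDerivAt_kineticAlpha_line {ξ : E3 → ℝ} (hξ : ContDiff ℝ 3 ξ) (x v : E3) (s : ℝ) :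
    HasDerivAt (fun t : ℝ => kineticAlpha ξ (x + t • v) v)
      (-2 * iteratedFDeriv ℝ 3 ξ (x + s • v) ![v, v, v] * ξ (x + s • v)) s := by
  set D : ℕ → ℝ → ℝ := fun k t => iteratedFDeriv ℝ k ξ (x + t • v) fun _ => v
  have hD : ∀ k < 3, HasDerivAt (D k) (D (k + 1) s) s := fun k hk =>
    hasDerivAt_iteratedFDeriv_apply_const_line (hξ.of_le (by exact_mod_cast hk)) x v s
  have hα : (fun t => kineticAlpha ξ (x + t • v) v) = fun t => D 1 t ^ 2 - 2 * D 2 t * D 0 t := by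
    funext t
    simp only [kineticAlpha, D, iteratedFDeriv_one_apply, iteratedFDeriv_zero_apply,
      Matrix.vec_single_eq_const, Matrix.vecCons_const]
  have h3 : iteratedFDeriv ℝ 3 ξ (x + s • v) ![v, v, v] = D 3 s := by
    simp only [D, Matrix.vec_single_eq_const, Matrix.vecCons_const]
  rw [hα, h3, show ξ (x + s • v) = D 0 s from (iteratedFDeriv_zero_apply _).symm]
  refine (((hD 1 (by norm_num)).fun_pow 2).sub
    (((hD 2 (by norm_num)).const_mul 2).fun_mul (hD 0 (by norm_num)))).congr_deriv ?_
  norm_num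
  ring

theorem abs_mul_le_mul_kineticAlpha {ξ : E3 → ℝ} {c M : ℝ} {y v : E3} (hc : 0 < c) (hM : 0 ≤ M)
    (hy : ξ y ≤ 0) (hconv : c * ‖v‖ ^ 2 ≤ iteratedFDeriv ℝ 2 ξ y ![v, v])
    (hthird : |iteratedFDeriv ℝ 3 ξ y ![v, v, v]| ≤ M * ‖v‖ ^ 3) :
    |-2 * iteratedFDeriv ℝ 3 ξ y ![v, v, v] * ξ y| ≤ M / c * ‖v‖ * kineticAlpha ξ y v := by
  have hα : 2 * c * ‖v‖ ^ 2 * -ξ y ≤ kineticAlpha ξ y v := by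
    unfold kineticAlpha
    nlinarith [sq_nonneg (fderiv ℝ ξ y v), mul_le_mul_of_nonneg_right hconv (neg_nonneg.2 hy)]
  calc |-2 * iteratedFDeriv ℝ 3 ξ y ![v, v, v] * ξ y|
        = 2 * |iteratedFDeriv ℝ 3 ξ y ![v, v, v]| * -ξ y := by
          rw [abs_mul, abs_mul, abs_of_nonpos hy]; norm_num
    _ ≤ 2 * (M * ‖v‖ ^ 3) * -ξ y := by gcongr; linarith
    _ = M / c * ‖v‖ * (2 * c * ‖v‖ ^ 2 * -ξ y) := by field_simp
    _ ≤ M / c * ‖v‖ * kineticAlpha ξ y v := by gcongr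

/-- Velocity Lemma (Lemma 1) along a free-flight segment of the trajectory. -/
theorem velocity_lemma_free_flight
    (ξ : E3 → ℝ) (hξ : ContDiff ℝ 3 ξ)
    (c M : ℝ) (hc : 0 < c) (hM : 0 ≤ M)
    (hconv : ∀ x ζ : E3, c * ‖ζ‖ ^ 2 ≤ iteratedFDeriv ℝ 2 ξ x ![ζ, ζ])
    (hthird : ∀ x ζ : E3, ξ x ≤ 0 → |iteratedFDeriv ℝ 3 ξ x ![ζ, ζ, ζ]| ≤ M * ‖ζ‖ ^ 3)
    (x v : E3) (s₁ s₂ : ℝ) (hs : s₁ ≤ s₂)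
    (hseg : ∀ σ ∈ Set.Icc s₁ s₂, ξ (x + σ • v) ≤ 0) :
    Real.exp (-(M / c) * ‖v‖ * (s₂ - s₁)) * kineticAlpha ξ (x + s₁ • v) v
        ≤ kineticAlpha ξ (x + s₂ • v) v ∧
      kineticAlpha ξ (x + s₂ • v) v
        ≤ Real.exp ((M / c) * ‖v‖ * (s₂ - s₁)) * kineticAlpha ξ (x + s₁ • v) v := by
  have h := exp_neg_mul_mul_le_and_le_exp_mul_mul_of_abs_hasDerivAt_le hs
    (fun t _ => hasDerivAt_kineticAlpha_line hξ x v t) fun t ht =>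
      abs_mul_le_mul_kineticAlpha hc hM (hseg t ht) (hconv _ v) (hthird _ v (hseg t ht))
  simpa only [neg_mul] using h
end
end

section
/- Let ξ : ℝ³ → ℝ be three times continuously differentiable. Then for every x, v ∈ ℝ³, the derivative at s = 0 of the function s ↦ α(x + s v, v) equals −2 ξ(x) · D³ξ(x)[v,v,v]. -/
noncomputable section

open Real

/-! Along `s ↦ x + s • v` we have `d/ds α = 2 A A' − 2 (B' C + B C')` with `A = Dξ[v]`,
`B = D²ξ[v,v]`, `C = ξ`; since `A' = B` and `C' = A`, everything cancels except `−2 B' C`,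
and `B' = D³ξ[v,v,v]`. -/

section LineDerivative

variable {E F : Type*} [NormedAddCommGroup E] [NormedSpace ℝ E]
  [NormedAddCommGroup F] [NormedSpace ℝ F]

theorem DifferentiableAt.hasDerivAt_comp_line {f : E → F} {x : E} (hf : DifferentiableAt ℝ f x)
    (v : E) : HasDerivAt (fun s : ℝ => f (x + s • v)) (fderiv ℝ f x v) 0 := by
  have hline : HasDerivAt (fun s : ℝ => x + s • v) v 0 := by
    simpa using ((hasDerivAt_id (0 : ℝ)).smul_const v).const_add x
  have hf' : HasFDerivAt f (fderiv ℝ f x) (x + (0 : ℝ) • v) := by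
    simpa using hf.hasFDerivAt
  exact hf'.comp_hasDerivAt 0 hline

theorem ContDiff.hasDerivAt_iteratedFDeriv_line {f : E → F} {n : ℕ}
    (hf : ContDiff ℝ (n + 1) f) (x v : E) (m : Fin n → E) :
    HasDerivAt (fun s : ℝ => iteratedFDeriv ℝ n f (x + s • v) m)
      (iteratedFDeriv ℝ (n + 1) f x (Fin.cons v m)) 0 := by
  have hdiff : DifferentiableAt ℝ (iteratedFDeriv ℝ n f) x :=
    hf.differentiable_iteratedFDeriv (mod_cast lt_add_one n) x
  have heval := (ContinuousMultilinearMap.apply ℝ (fun _ : Fin n => E) F m).hasFDerivAt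
    |>.comp_hasDerivAt 0 (hdiff.hasDerivAt_comp_line v)
  simpa only [iteratedFDeriv_succ_apply_left, Fin.cons_zero, Fin.tail_cons, Function.comp_def,
    ContinuousMultilinearMap.apply_apply] using heval

end LineDerivative

/-- The exact cancellation identity `v·∇ₓα = −2 ξ(x) D³ξ(x)[v,v,v]`:
the derivative at `s = 0` of `s ↦ α(x + s v, v)`. -/
theorem kineticAlpha_transport_deriv
    (ξ : E3 → ℝ) (hξ : ContDiff ℝ 3 ξ) (x v : E3) :
    HasDerivAt (fun s : ℝ => kineticAlpha ξ (x + s • v) v)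
      (-2 * ξ x * iteratedFDeriv ℝ 3 ξ x ![v, v, v]) 0 := by
  have hC : HasDerivAt (fun s : ℝ => ξ (x + s • v)) (fderiv ℝ ξ x v) 0 :=
    ((hξ.differentiable (by norm_num)) x).hasDerivAt_comp_line v
  have hA : HasDerivAt (fun s : ℝ => fderiv ℝ ξ (x + s • v) v)
      (iteratedFDeriv ℝ 2 ξ x ![v, v]) 0 := by
    have h := (hξ.of_le (by norm_num)).hasDerivAt_iteratedFDeriv_line (n := 1) x v ![v]
    simp only [iteratedFDeriv_one_apply, Matrix.cons_val_zero] at h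
    exact h
  have hB : HasDerivAt (fun s : ℝ => iteratedFDeriv ℝ 2 ξ (x + s • v) ![v, v])
      (iteratedFDeriv ℝ 3 ξ x ![v, v, v]) 0 :=
    hξ.hasDerivAt_iteratedFDeriv_line (n := 2) x v ![v, v]
  have hα := (hA.pow 2).sub ((hB.const_mul 2).mul hC)
  simp only [zero_smul, add_zero] at hα
  exact hα.congr_deriv (by ring)
end
end

section
/- Let ξ : ℝ³ → ℝ be twice continuously differentiable and let c > 0 satisfy D²ξ(x)[ζ,ζ] ≥ c|ζ|² for all x, ζ ∈ ℝ³. Then for every x ∈ ℝ³ with ξ(x) ≤ 0 and every v ∈ ℝ³ one has α(x,v) ≥ (∇ξ(x)·v)² + 2c|ξ(x)||v|²; consequently, for every such x and every v ≠ 0, α(x,v) = 0 if and only if ξ(x) = 0 and ∇ξ(x)·v = 0. -/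
noncomputable section

open Real

lemma eq_zero_and_eq_zero_of_sq_add_mul_abs_nonpos {a b k : ℝ} (hk : 0 < k)
    (h : a ^ 2 + k * |b| ≤ 0) : b = 0 ∧ a = 0 := by
  have hsum := (add_eq_zero_iff_of_nonneg (sq_nonneg a) (by positivity)).1
    (le_antisymm h (by positivity))
  exact ⟨abs_eq_zero.1 ((mul_eq_zero.1 hsum.2).resolve_left hk.ne'),
    pow_eq_zero_iff two_ne_zero |>.1 hsum.1⟩

lemma kineticAlpha_lower_bound {ξ : E3 → ℝ} {c : ℝ} {x v : E3} (hx : ξ x ≤ 0)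
    (hv : c * ‖v‖ ^ 2 ≤ iteratedFDeriv ℝ 2 ξ x ![v, v]) :
    (fderiv ℝ ξ x v) ^ 2 + 2 * c * |ξ x| * ‖v‖ ^ 2 ≤ kineticAlpha ξ x v := by
  have := mul_le_mul_of_nonneg_left hv (neg_nonneg.2 hx)
  rw [kineticAlpha, abs_of_nonpos hx]
  linarith

lemma kineticAlpha_of_grazing {ξ : E3 → ℝ} {x v : E3} (hx : ξ x = 0)
    (hv : fderiv ℝ ξ x v = 0) : kineticAlpha ξ x v = 0 := by
  simp [kineticAlpha, hx, hv]

theorem kineticAlpha_lower_bound_and_vanishing_general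
    (ξ : E3 → ℝ)
    (c : ℝ) (hc : 0 < c)
    (hconv : ∀ x ζ : E3, c * ‖ζ‖ ^ 2 ≤ iteratedFDeriv ℝ 2 ξ x ![ζ, ζ]) :
    ∀ x : E3, ξ x ≤ 0 →
      (∀ v : E3, (fderiv ℝ ξ x v) ^ 2 + 2 * c * |ξ x| * ‖v‖ ^ 2 ≤ kineticAlpha ξ x v) ∧
      (∀ v : E3, v ≠ 0 → (kineticAlpha ξ x v = 0 ↔ ξ x = 0 ∧ fderiv ℝ ξ x v = 0)) := by
  intro x hx
  have hbound v := kineticAlpha_lower_bound hx (hconv x v)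
  refine ⟨hbound, fun v hv =>
    ⟨fun hα => ?_, fun ⟨hξx, hdv⟩ => kineticAlpha_of_grazing hξx hdv⟩⟩
  have hk : 0 < 2 * c * ‖v‖ ^ 2 := by have := norm_pos_iff.2 hv; positivity
  refine eq_zero_and_eq_zero_of_sq_add_mul_abs_nonpos hk ?_
  calc (fderiv ℝ ξ x v) ^ 2 + 2 * c * ‖v‖ ^ 2 * |ξ x|
      = (fderiv ℝ ξ x v) ^ 2 + 2 * c * |ξ x| * ‖v‖ ^ 2 := by ring
    _ ≤ 0 := hα ▸ hbound v

/-- On the closure of `Ω = {ξ < 0}` the kinetic distance satisfies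
`α(x,v) ≥ (∇ξ(x)·v)² + 2c|ξ(x)||v|²`; consequently, for `v ≠ 0`,
`α(x,v) = 0` iff `(x,v)` belongs to the grazing set. -/
theorem kineticAlpha_lower_bound_and_vanishing
    (ξ : E3 → ℝ) (hξ : ContDiff ℝ 2 ξ)
    (c : ℝ) (hc : 0 < c)
    (hconv : ∀ x ζ : E3, c * ‖ζ‖ ^ 2 ≤ iteratedFDeriv ℝ 2 ξ x ![ζ, ζ]) :
    ∀ x : E3, ξ x ≤ 0 →
      (∀ v : E3, (fderiv ℝ ξ x v) ^ 2 + 2 * c * |ξ x| * ‖v‖ ^ 2 ≤ kineticAlpha ξ x v) ∧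
      (∀ v : E3, v ≠ 0 → (kineticAlpha ξ x v = 0 ↔ ξ x = 0 ∧ fderiv ℝ ξ x v = 0)) :=
  kineticAlpha_lower_bound_and_vanishing_general ξ c hc hconv
end
end

section
/- Let ξ : ℝ³ → ℝ be twice continuously differentiable and let 0 < c ≤ M satisfy c|ζ|² ≤ D²ξ(x)[ζ,ζ] ≤ M|ζ|² for all x, ζ ∈ ℝ³. If v ∈ ℝ³ is nonzero, t > 0, and ξ(x) = 0 = ξ(x − t v), then (c/2)|v|² t ≤ ∇ξ(x)·v ≤ (M/2)|v|² t. -/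
/-!
Restrict `ξ` to the line through `x - t v` and `x`: `g s = ξ (x - t v + s v)` satisfies
`g 0 = g t = 0` and `c |v|² ≤ g'' ≤ M |v|²`. Then `g - c |v|² s² / 2` is convex, so its secant
slope over `[0, t]` is at most its derivative at `t`, which gives `c |v|² t / 2 ≤ g' t = ∇ξ(x)·v`;
the upper bound is the same argument applied to `-g`.
-/

open Set

theorem slope_add_half_mul_le_of_le_deriv2 {g g' g'' : ℝ → ℝ} {a x y : ℝ}
    (hg : ∀ s, HasDerivAt g (g' s) s) (hg' : ∀ s, HasDerivAt g' (g'' s) s)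
    (ha : ∀ s, a ≤ g'' s) (hxy : x < y) :
    slope g x y + a / 2 * (y - x) ≤ g' y := by
  have hd : ∀ s, HasDerivAt (fun s => g s - a / 2 * s ^ 2) (g' s - a * s) s := fun s =>
    ((hg s).sub ((hasDerivAt_pow 2 s).const_mul (a / 2))).congr_deriv (by push_cast; ring)
  have hd' : ∀ s, HasDerivAt (fun s => g' s - a * s) (g'' s - a) s := fun s =>
    ((hg' s).sub ((hasDerivAt_id s).const_mul a)).congr_deriv (by ring)
  have hconv : ConvexOn ℝ univ (fun s => g s - a / 2 * s ^ 2) :=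
    convexOn_of_hasDerivWithinAt2_nonneg convex_univ
      (fun s _ => (hd s).continuousAt.continuousWithinAt)
      (fun s _ => (hd s).hasDerivWithinAt) (fun s _ => (hd' s).hasDerivWithinAt)
      (fun s _ => sub_nonneg.2 (ha s))
  have hslope := hconv.slope_le_of_hasDerivAt (mem_univ x) (mem_univ y) hxy (hd y)
  have hyx : y - x ≠ 0 := sub_ne_zero.2 hxy.ne'
  have hsub : slope (fun s => g s - a / 2 * s ^ 2) x y = slope g x y - a / 2 * (x + y) := by
    simp only [slope_def_field]
    field_simp
    ring
  linarith

theorem le_slope_add_half_mul_of_deriv2_le {g g' g'' : ℝ → ℝ} {b x y : ℝ}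
    (hg : ∀ s, HasDerivAt g (g' s) s) (hg' : ∀ s, HasDerivAt g' (g'' s) s)
    (hb : ∀ s, g'' s ≤ b) (hxy : x < y) :
    g' y ≤ slope g x y + b / 2 * (y - x) := by
  have := slope_add_half_mul_le_of_le_deriv2 (g := -g) (g' := -g') (g'' := -g'') (a := -b)
    (fun s => (hg s).neg) (fun s => (hg' s).neg) (fun s => neg_le_neg (hb s)) hxy
  simp only [slope_neg_fun, Pi.neg_apply] at this
  linarith

section Line

variable {E : Type*} [NormedAddCommGroup E] [NormedSpace ℝ E]

theorem hasDerivAt_add_smul (x v : E) (s : ℝ) : HasDerivAt (fun s : ℝ => x + s • v) v s := by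
  simpa using ((hasDerivAt_id s).smul_const v).const_add x

theorem Differentiable.hasDerivAt_comp_add_smul {ξ : E → ℝ} (hξ : Differentiable ℝ ξ)
    (x v : E) (s : ℝ) :
    HasDerivAt (fun s : ℝ => ξ (x + s • v)) (fderiv ℝ ξ (x + s • v) v) s :=
  (hξ _).hasFDerivAt.comp_hasDerivAt s (hasDerivAt_add_smul x v s)

theorem ContDiff.hasDerivAt_fderiv_comp_add_smul {ξ : E → ℝ} (hξ : ContDiff ℝ 2 ξ)
    (x v : E) (s : ℝ) :
    HasDerivAt (fun s : ℝ => fderiv ℝ ξ (x + s • v) v)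
      (iteratedFDeriv ℝ 2 ξ (x + s • v) ![v, v]) s := by
  have hfd : Differentiable ℝ (fderiv ℝ ξ) :=
    (hξ.fderiv_right (m := 1) (by norm_num)).differentiable one_ne_zero
  rw [iteratedFDeriv_two_apply]
  exact (ContinuousLinearMap.apply ℝ ℝ v).hasFDerivAt.comp_hasDerivAt s
    ((hfd _).hasFDerivAt.comp_hasDerivAt s (hasDerivAt_add_smul x v s))

end Line

theorem exit_time_two_sided_estimate_general
    (ξ : E3 → ℝ) (hξ : ContDiff ℝ 2 ξ)
    (c M : ℝ)
    (hconv : ∀ x ζ : E3, c * ‖ζ‖ ^ 2 ≤ iteratedFDeriv ℝ 2 ξ x ![ζ, ζ])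
    (hconv' : ∀ x ζ : E3, iteratedFDeriv ℝ 2 ξ x ![ζ, ζ] ≤ M * ‖ζ‖ ^ 2)
    (x v : E3) (t : ℝ) (ht : 0 < t)
    (hx : ξ x = 0) (hxb : ξ (x - t • v) = 0) :
    c / 2 * ‖v‖ ^ 2 * t ≤ fderiv ℝ ξ x v ∧ fderiv ℝ ξ x v ≤ M / 2 * ‖v‖ ^ 2 * t := by
  set y := x - t • v
  have hg := (hξ.differentiable two_ne_zero).hasDerivAt_comp_add_smul y v
  have hg' := hξ.hasDerivAt_fderiv_comp_add_smul y v
  have hyt : y + t • v = x := sub_add_cancel x (t • v)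
  have hslope : slope (fun s : ℝ => ξ (y + s • v)) 0 t = 0 :=
    slope_eq_zero_iff.2 (by simp [hyt, hx, hxb, y])
  constructor
  · have := slope_add_half_mul_le_of_le_deriv2 hg hg' (fun s => hconv (y + s • v) v) ht
    rw [hslope, hyt] at this
    linarith
  · have := le_slope_add_half_mul_of_deriv2_le hg hg' (fun s => hconv' (y + s • v) v) ht
    rw [hslope, hyt] at this
    linarith

/-- Two-sided backward exit-time estimates: if `x` and `x − t v` both lie on the
boundary `{ξ = 0}` of the uniformly convex domain, then the exit time `t` is
comparable to `∇ξ(x)·v / |v|²`. -/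
theorem exit_time_two_sided_estimate
    (ξ : E3 → ℝ) (hξ : ContDiff ℝ 2 ξ)
    (c M : ℝ) (hc : 0 < c) (hcM : c ≤ M)
    (hconv : ∀ x ζ : E3, c * ‖ζ‖ ^ 2 ≤ iteratedFDeriv ℝ 2 ξ x ![ζ, ζ])
    (hconv' : ∀ x ζ : E3, iteratedFDeriv ℝ 2 ξ x ![ζ, ζ] ≤ M * ‖ζ‖ ^ 2)
    (x v : E3) (hv : v ≠ 0) (t : ℝ) (ht : 0 < t)
    (hx : ξ x = 0) (hxb : ξ (x - t • v) = 0) :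
    c / 2 * ‖v‖ ^ 2 * t ≤ fderiv ℝ ξ x v ∧ fderiv ℝ ξ x v ≤ M / 2 * ‖v‖ ^ 2 * t :=
  exit_time_two_sided_estimate_general ξ hξ c M hconv hconv' x v t ht hx hxb
end

section
/- Let ξ : ℝ³ → ℝ be twice continuously differentiable with D²ξ(x)[ζ,ζ] ≥ c|ζ|² for some c > 0 and all x, ζ ∈ ℝ³. Let v ∈ ℝ³ be nonzero, t_b > 0, and suppose ξ(x) = 0 = ξ(x − t_b v). For s ∈ [0, t_b] set X(s) := x − (t_b − s)v and Φ(s) := (∇ξ(X(s))·v)² + |v|² ξ(X(s)). Then: (a) there is a unique s* ∈ (0, t_b) with ∇ξ(X(s*))·v = 0, and ∇ξ(X(s))·v < 0 for s ∈ [0, s*) while ∇ξ(X(s))·v > 0 for s ∈ (s*, t_b]; (b) Φ is strictly decreasing on [0, s*] and strictly increasing on [s*, t_b]. -/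
/-!
Along the chord, `g(s) = ξ(X(s))` vanishes at both ends and `g' = ∇ξ(X)·v` has derivative
`D²ξ(X)[v,v] ≥ c|v|² > 0`. So `g'` is strictly increasing and, by Rolle, has exactly one zero
`s*`, with the sign pattern of (a). Differentiating, `Φ' = (∇ξ(X)·v) (2 D²ξ(X)[v,v] + |v|²)`,
whose second factor is positive, so `Φ'` has the sign of `∇ξ(X)·v`, which gives (b).
-/

open Set

section Energy

variable {g G H : ℝ → ℝ} {k a b : ℝ}

theorem hasDerivAt_sq_add_mul {s : ℝ} (hg : HasDerivAt g (G s) s) (hG : HasDerivAt G (H s) s) :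
    HasDerivAt (fun t => G t ^ 2 + k * g t) (G s * (2 * H s + k)) s := by
  refine ((hG.fun_pow 2).add (hg.const_mul k)).congr_deriv ?_
  norm_num
  ring

theorem strictAntiOn_sq_add_mul (hg : ∀ s, HasDerivAt g (G s) s)
    (hG : ∀ s, HasDerivAt G (H s) s) (hH : ∀ s, 0 < H s) (hk : 0 ≤ k)
    (hneg : ∀ s ∈ Ioo a b, G s < 0) : StrictAntiOn (fun t => G t ^ 2 + k * g t) (Icc a b) := by
  have hΦ (s : ℝ) := hasDerivAt_sq_add_mul (k := k) (hg s) (hG s)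
  refine strictAntiOn_of_deriv_neg (convex_Icc a b)
    (fun s _ => (hΦ s).continuousAt.continuousWithinAt) fun s hs => ?_
  rw [interior_Icc] at hs
  rw [(hΦ s).deriv]
  exact mul_neg_of_neg_of_pos (hneg s hs) (by linarith [hH s])

theorem strictMonoOn_sq_add_mul (hg : ∀ s, HasDerivAt g (G s) s)
    (hG : ∀ s, HasDerivAt G (H s) s) (hH : ∀ s, 0 < H s) (hk : 0 ≤ k)
    (hpos : ∀ s ∈ Ioo a b, 0 < G s) : StrictMonoOn (fun t => G t ^ 2 + k * g t) (Icc a b) := by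
  have hΦ (s : ℝ) := hasDerivAt_sq_add_mul (k := k) (hg s) (hG s)
  refine strictMonoOn_of_deriv_pos (convex_Icc a b)
    (fun s _ => (hΦ s).continuousAt.continuousWithinAt) fun s hs => ?_
  rw [interior_Icc] at hs
  rw [(hΦ s).deriv]
  exact mul_pos (hpos s hs) (by linarith [hH s])

end Energy

section Directional

variable {E F : Type*} [NormedAddCommGroup E] [NormedSpace ℝ E]
  [NormedAddCommGroup F] [NormedSpace ℝ F]

theorem ContDiff.hasDerivAt_fderiv_apply_comp {f : E → F} (hf : ContDiff ℝ 2 f) {γ : ℝ → E}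
    {v : E} {s : ℝ} (hγ : HasDerivAt γ v s) :
    HasDerivAt (fun t => fderiv ℝ f (γ t) v) (iteratedFDeriv ℝ 2 f (γ s) ![v, v]) s := by
  have hf' : Differentiable ℝ (fderiv ℝ f) :=
    (hf.fderiv_right (m := 1) (by norm_num)).differentiable one_ne_zero
  have := ((ContinuousLinearMap.apply ℝ F v).hasFDerivAt.comp (γ s)
    (hf' (γ s)).hasFDerivAt).comp_hasDerivAt s hγ
  rw [iteratedFDeriv_two_apply]
  exact this

theorem hasDerivAt_sub_sub_smul (x v : E) (b s : ℝ) :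
    HasDerivAt (fun t : ℝ => x - (b - t) • v) v s := by
  simpa using (((hasDerivAt_id s).const_sub b).smul_const v).const_sub x

end Directional

/-- Structural monotonicity along a chord of the uniformly convex domain:
with `X(s) = x − (t_b − s) v` and `Φ(s) = (∇ξ(X(s))·v)² + |v|² ξ(X(s))`,
there is a unique interior time `s*` where `∇ξ(X(s*))·v = 0`, the quantity
`∇ξ(X(s))·v` is negative before and positive after, and `Φ` is strictly
decreasing on `[0,s*]` and strictly increasing on `[s*,t_b]`. -/
theorem chord_sign_and_monotonicity
    (ξ : E3 → ℝ) (hξ : ContDiff ℝ 2 ξ)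
    (c : ℝ) (hc : 0 < c)
    (hconv : ∀ x ζ : E3, c * ‖ζ‖ ^ 2 ≤ iteratedFDeriv ℝ 2 ξ x ![ζ, ζ])
    (x v : E3) (hv : v ≠ 0) (tb : ℝ) (htb : 0 < tb)
    (hx : ξ x = 0) (hxb : ξ (x - tb • v) = 0) :
    ∃ sstar ∈ Set.Ioo 0 tb,
      fderiv ℝ ξ (x - (tb - sstar) • v) v = 0 ∧
      (∀ s ∈ Set.Ioo 0 tb, fderiv ℝ ξ (x - (tb - s) • v) v = 0 → s = sstar) ∧
      (∀ s ∈ Set.Ico 0 sstar, fderiv ℝ ξ (x - (tb - s) • v) v < 0) ∧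
      (∀ s ∈ Set.Ioc sstar tb, 0 < fderiv ℝ ξ (x - (tb - s) • v) v) ∧
      StrictAntiOn
        (fun s : ℝ =>
          (fderiv ℝ ξ (x - (tb - s) • v) v) ^ 2 + ‖v‖ ^ 2 * ξ (x - (tb - s) • v))
        (Set.Icc 0 sstar) ∧
      StrictMonoOn
        (fun s : ℝ =>
          (fderiv ℝ ξ (x - (tb - s) • v) v) ^ 2 + ‖v‖ ^ 2 * ξ (x - (tb - s) • v))
        (Set.Icc sstar tb) := by
  set G : ℝ → ℝ := fun s => fderiv ℝ ξ (x - (tb - s) • v) v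
  have hX := hasDerivAt_sub_sub_smul x v tb
  have hg (s : ℝ) : HasDerivAt (fun t => ξ (x - (tb - t) • v)) (G s) s :=
    ((hξ.differentiable two_ne_zero).differentiableAt.hasFDerivAt).comp_hasDerivAt s (hX s)
  have hG (s : ℝ) := hξ.hasDerivAt_fderiv_apply_comp (hX s)
  have hH (s : ℝ) : 0 < iteratedFDeriv ℝ 2 ξ (x - (tb - s) • v) ![v, v] :=
    (mul_pos hc (pow_pos (norm_pos_iff.mpr hv) 2)).trans_le (hconv _ v)
  have hGmono : StrictMono G := strictMono_of_deriv_pos fun s => (hG s).deriv ▸ hH s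
  obtain ⟨sstar, hsstar, hG₀⟩ := exists_hasDerivAt_eq_zero htb
    (fun s _ => (hg s).continuousAt.continuousWithinAt) (by simp [hx, hxb]) (fun s _ => hg s)
  have hneg {s : ℝ} (hs : s < sstar) : G s < 0 := hG₀ ▸ hGmono hs
  have hpos {s : ℝ} (hs : sstar < s) : 0 < G s := hG₀ ▸ hGmono hs
  refine ⟨sstar, hsstar, hG₀, fun s _ hs => hGmono.injective (hs.trans hG₀.symm),
    fun s hs => hneg hs.2, fun s hs => hpos hs.1, ?_, ?_⟩
  · exact strictAntiOn_sq_add_mul hg hG hH (sq_nonneg _) fun s hs => hneg hs.2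
  · exact strictMonoOn_sq_add_mul hg hG hH (sq_nonneg _) fun s hs => hpos hs.1
end

section
/- For every ϱ > 0 and every θ with −2ϱ < θ < 2ϱ, there exists a constant C > 0 such that for all v, η ∈ ℝ³ with η ≠ 0: −ϱ|η|² − ϱ(|η|² − 2 v·η)²/|η|² − θ(|η|² − 2 v·η) ≤ −C(|η|² + |v·η|). -/
/-!
Write `r = |η|²`, `s = v·η` and `w = r − 2s`. Multiplied by `r`, the exponent is minus the
quadratic form `ϱ r² + θ r w + ϱ w²`, whose discriminant `θ² − 4ϱ²` is negative, so it dominates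
`(ϱ − |θ|/2)(r² + w²)`; and `r² + w²` controls `r (r + |s|)` because `2s = r − w`.
-/

noncomputable section

open Real

lemma sub_half_abs_mul_sq_add_sq_le (ϱ θ a b : ℝ) :
    (ϱ - |θ| / 2) * (a ^ 2 + b ^ 2) ≤ ϱ * a ^ 2 + θ * (a * b) + ϱ * b ^ 2 := by
  have hab : |a * b| ≤ (a ^ 2 + b ^ 2) / 2 := by
    rw [abs_mul]
    nlinarith [sq_nonneg (|a| - |b|), sq_abs a, sq_abs b]
  have hθab : -(θ * (a * b)) ≤ |θ| * ((a ^ 2 + b ^ 2) / 2) :=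
    (neg_le_abs _).trans (abs_mul θ (a * b) ▸
      mul_le_mul_of_nonneg_left hab (abs_nonneg θ))
  linarith

lemma mul_add_abs_le_two_mul_sq_add_sq (r s : ℝ) :
    r * (r + |s|) ≤ 2 * (r ^ 2 + (r - 2 * s) ^ 2) := by
  rcases abs_cases s with ⟨hs, -⟩ | ⟨hs, -⟩ <;> rw [hs] <;>
    nlinarith [sq_nonneg (r - 2 * s), sq_nonneg (3 * r - 4 * s)]

lemma grad_exponent_le {ϱ θ r : ℝ} (hθ : |θ| ≤ 2 * ϱ) (hr : 0 < r) (s : ℝ) :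
    -ϱ * r - ϱ * (r - 2 * s) ^ 2 / r - θ * (r - 2 * s)
      ≤ -((2 * ϱ - |θ|) / 4) * (r + |s|) := by
  set w := r - 2 * s
  have hc : 0 ≤ ϱ - |θ| / 2 := by linarith
  have hform : (ϱ - |θ| / 2) / 2 * (r * (r + |s|)) ≤ ϱ * r ^ 2 + θ * (r * w) + ϱ * w ^ 2 :=
    calc (ϱ - |θ| / 2) / 2 * (r * (r + |s|))
        ≤ (ϱ - |θ| / 2) / 2 * (2 * (r ^ 2 + w ^ 2)) :=
          mul_le_mul_of_nonneg_left (mul_add_abs_le_two_mul_sq_add_sq r s) (by linarith)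
      _ = (ϱ - |θ| / 2) * (r ^ 2 + w ^ 2) := by ring
      _ ≤ _ := sub_half_abs_mul_sq_add_sq_le ϱ θ r w
  calc -ϱ * r - ϱ * w ^ 2 / r - θ * w
      = -(ϱ * r ^ 2 + θ * (r * w) + ϱ * w ^ 2) / r := by field_simp; ring
    _ ≤ -((ϱ - |θ| / 2) / 2 * (r * (r + |s|))) / r := by gcongr
    _ = -((2 * ϱ - |θ|) / 4) * (r + |s|) := by field_simp; ring

theorem grad_kernel_exponent_negativity_general
    (ϱ θ : ℝ) (hθ₁ : -(2 * ϱ) < θ) (hθ₂ : θ < 2 * ϱ) :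
    ∃ C > 0, ∀ v η : E3, η ≠ 0 →
      -ϱ * ‖η‖ ^ 2 - ϱ * (‖η‖ ^ 2 - 2 * (inner ℝ v η : ℝ)) ^ 2 / ‖η‖ ^ 2
          - θ * (‖η‖ ^ 2 - 2 * (inner ℝ v η : ℝ))
        ≤ -C * (‖η‖ ^ 2 + |(inner ℝ v η : ℝ)|) := by
  have hθ : |θ| < 2 * ϱ := abs_lt.2 ⟨hθ₁, hθ₂⟩
  exact ⟨(2 * ϱ - |θ|) / 4, by linarith, fun v η hη =>
    grad_exponent_le hθ.le (by positivity) _⟩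

/-- Negative definiteness of the total exponent in the proof of the Grad kernel
estimate (Lemma 2.2), after the change of variables `u = v − η`. -/
theorem grad_kernel_exponent_negativity
    (ϱ θ : ℝ) (hϱ : 0 < ϱ) (hθ₁ : -(2 * ϱ) < θ) (hθ₂ : θ < 2 * ϱ) :
    ∃ C > 0, ∀ v η : E3, η ≠ 0 →
      -ϱ * ‖η‖ ^ 2 - ϱ * (‖η‖ ^ 2 - 2 * (inner ℝ v η : ℝ)) ^ 2 / ‖η‖ ^ 2
          - θ * (‖η‖ ^ 2 - 2 * (inner ℝ v η : ℝ))
        ≤ -C * (‖η‖ ^ 2 + |(inner ℝ v η : ℝ)|) :=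
  grad_kernel_exponent_negativity_general ϱ θ hθ₁ hθ₂
end
end

section
/- Let 0 ≤ κ ≤ 1, let q₀ : ℝ → ℝ be measurable with 0 ≤ q₀(z) ≤ Q for all z and some constant Q ≥ 0, let 0 < θ < 1/4, and let g₁, g₂ : ℝ³ → ℝ be measurable functions with |gᵢ(u)| ≤ Kᵢ e^{−θ|u|²} for all u (i = 1,2). Define, for v ∈ ℝ³, Γ_gain(g₁,g₂)(v) := ∫_{ℝ³} ∫_{S²} |v−u|^κ · q₀( ((v−u)/|v−u|)·ω ) · e^{−|u|²/4} · g₁(u + ((v−u)·ω)ω) · g₂(v − ((v−u)·ω)ω) dσ(ω) du, where σ is the surface measure on the unit sphere S² ⊂ ℝ³. Then there exists a constant C, depending only on κ, Q and θ, such that |Γ_gain(g₁,g₂)(v)| ≤ C K₁ K₂ (1+|v|)^κ e^{−θ|v|²} for every v ∈ ℝ³. -/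
/-!
Energy conservation `|u'|² + |v'|² = |u|² + |v|²` turns the product of the Gaussian bounds on
`g₁(u')` and `g₂(v')` into `K₁ K₂ e^{-θ|u|²} e^{-θ|v|²} ≤ K₁ K₂ e^{-θ|v|²}`, while for `κ ≤ 1`
the kinetic factor satisfies `|v - u|^κ ≤ (1 + |v|)^κ (1 + |u|)`. Hence the integrand is bounded
by `Q K₁ K₂ (1 + |v|)^κ e^{-θ|v|²}` times `(1 + |u|) e^{-|u|²/4}`, which is integrable in `u`;
the sphere has finite measure.
-/

noncomputable section

open Real MeasureTheory

theorem rpow_norm_sub_le {G : Type*} [SeminormedAddCommGroup G] {κ : ℝ} (hκ₀ : 0 ≤ κ)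
    (hκ₁ : κ ≤ 1) (u v : G) : ‖v - u‖ ^ κ ≤ (1 + ‖v‖) ^ κ * (1 + ‖u‖) := by
  have h_sub : ‖v - u‖ ≤ (1 + ‖v‖) * (1 + ‖u‖) := by
    nlinarith [norm_sub_le v u, norm_nonneg v, norm_nonneg u]
  calc ‖v - u‖ ^ κ ≤ ((1 + ‖v‖) * (1 + ‖u‖)) ^ κ := by gcongr
    _ = (1 + ‖v‖) ^ κ * (1 + ‖u‖) ^ κ := mul_rpow (by positivity) (by positivity)
    _ ≤ (1 + ‖v‖) ^ κ * (1 + ‖u‖) ^ (1 : ℝ) := by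
        gcongr
        linarith [norm_nonneg u]
    _ = (1 + ‖v‖) ^ κ * (1 + ‖u‖) := by rw [rpow_one]

theorem one_add_mul_exp_neg_sq_div_four_le (t : ℝ) :
    (1 + t) * exp (-t ^ 2 / 4) ≤ 3 * exp (-(1 / 8) * t ^ 2) :=
  calc (1 + t) * exp (-t ^ 2 / 4) ≤ 3 * exp (t ^ 2 / 8) * exp (-t ^ 2 / 4) := by
        gcongr
        -- `1 + t ≤ 3 (1 + t² / 8) ≤ 3 e^{t² / 8}`
        nlinarith [add_one_le_exp (t ^ 2 / 8), sq_nonneg (t - 4 / 3)]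
    _ = 3 * exp (-(1 / 8) * t ^ 2) := by
        rw [mul_assoc, ← exp_add]
        ring_nf

theorem norm_integral_integral_le_of_norm_le {α β F : Type*} [MeasurableSpace α]
    [MeasurableSpace β] [NormedAddCommGroup F] [NormedSpace ℝ F] {μ : Measure α} {ν : Measure β}
    [IsFiniteMeasure ν] {f : α → β → F} {g : α → ℝ} (hg : Integrable g μ)
    (hfg : ∀ a b, ‖f a b‖ ≤ g a) :
    ‖∫ a, ∫ b, f a b ∂ν ∂μ‖ ≤ ν.real Set.univ * ∫ a, g a ∂μ := by
  rw [← integral_const_mul]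
  refine norm_integral_le_of_norm_le (hg.const_mul _) (ae_of_all _ fun a => ?_)
  rw [mul_comm]
  exact norm_integral_le_of_norm_le_const (ae_of_all _ (hfg a))

section InnerProductSpace

variable {V : Type*} [NormedAddCommGroup V] [InnerProductSpace ℝ V]

theorem integrable_one_add_norm_mul_exp_neg_sq_div_four [FiniteDimensional ℝ V]
    [MeasurableSpace V] [BorelSpace V] :
    Integrable fun u : V => (1 + ‖u‖) * exp (-‖u‖ ^ 2 / 4) := by
  have h_gauss : Integrable fun u : V => exp (-(1 / 8) * ‖u‖ ^ 2) := by
    convert (GaussianFourier.integrable_cexp_neg_mul_sq_norm_add (V := V) (b := 1 / 8)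
      (by norm_num) 0 0).norm using 2 with u
    simp [Complex.norm_exp, ← Complex.ofReal_pow]
  refine (h_gauss.const_mul 3).mono' (by fun_prop) (ae_of_all _ fun u => ?_)
  rw [Real.norm_of_nonneg (by positivity)]
  exact one_add_mul_exp_neg_sq_div_four_le ‖u‖

theorem norm_sq_add_norm_sq_collision (u v ω : V) (hω : ‖ω‖ = 1) :
    ‖u + inner ℝ (v - u) ω • ω‖ ^ 2 + ‖v - inner ℝ (v - u) ω • ω‖ ^ 2 = ‖u‖ ^ 2 + ‖v‖ ^ 2 := by
  rw [norm_add_sq_real, norm_sub_sq_real, real_inner_smul_right, real_inner_smul_right,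
    norm_smul, hω, mul_one, Real.norm_eq_abs, sq_abs, inner_sub_left]
  ring

theorem abs_mul_abs_collision_le {θ K₁ K₂ : ℝ} (hθ : 0 ≤ θ) {g₁ g₂ : V → ℝ}
    (hg₁ : ∀ u, |g₁ u| ≤ K₁ * exp (-θ * ‖u‖ ^ 2)) (hg₂ : ∀ u, |g₂ u| ≤ K₂ * exp (-θ * ‖u‖ ^ 2))
    (u v ω : V) (hω : ‖ω‖ = 1) :
    |g₁ (u + inner ℝ (v - u) ω • ω)| * |g₂ (v - inner ℝ (v - u) ω • ω)| ≤
      K₁ * K₂ * exp (-θ * ‖v‖ ^ 2) := by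
  have hK₁ : 0 ≤ K₁ := nonneg_of_mul_nonneg_left ((abs_nonneg _).trans (hg₁ 0)) (exp_pos _)
  have hK₂ : 0 ≤ K₂ := nonneg_of_mul_nonneg_left ((abs_nonneg _).trans (hg₂ 0)) (exp_pos _)
  have h_energy := norm_sq_add_norm_sq_collision u v ω hω
  calc |g₁ (u + inner ℝ (v - u) ω • ω)| * |g₂ (v - inner ℝ (v - u) ω • ω)|
      ≤ K₁ * exp (-θ * ‖u + inner ℝ (v - u) ω • ω‖ ^ 2) *
          (K₂ * exp (-θ * ‖v - inner ℝ (v - u) ω • ω‖ ^ 2)) :=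
        mul_le_mul (hg₁ _) (hg₂ _) (abs_nonneg _) (by positivity)
    _ = K₁ * K₂ * exp (-θ * (‖u‖ ^ 2 + ‖v‖ ^ 2)) := by
        rw [← h_energy, mul_add, exp_add]
        ring
    _ ≤ K₁ * K₂ * exp (-θ * ‖v‖ ^ 2) := by
        gcongr K₁ * K₂ * exp ?_
        nlinarith [sq_nonneg ‖u‖]

def gainIntegrand (κ : ℝ) (q₀ : ℝ → ℝ) (g₁ g₂ : V → ℝ) (v u ω : V) : ℝ :=
  ‖v - u‖ ^ κ * q₀ (inner ℝ (‖v - u‖⁻¹ • (v - u)) ω) * exp (-‖u‖ ^ 2 / 4) *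
    g₁ (u + inner ℝ (v - u) ω • ω) * g₂ (v - inner ℝ (v - u) ω • ω)

theorem abs_gainIntegrand_le {κ θ Q K₁ K₂ : ℝ} (hκ₀ : 0 ≤ κ) (hκ₁ : κ ≤ 1) (hθ : 0 ≤ θ)
    {q₀ : ℝ → ℝ} (hq : ∀ z, |q₀ z| ≤ Q) {g₁ g₂ : V → ℝ}
    (hg₁ : ∀ u, |g₁ u| ≤ K₁ * exp (-θ * ‖u‖ ^ 2)) (hg₂ : ∀ u, |g₂ u| ≤ K₂ * exp (-θ * ‖u‖ ^ 2))
    (v u ω : V) (hω : ‖ω‖ = 1) :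
    |gainIntegrand κ q₀ g₁ g₂ v u ω| ≤
      Q * K₁ * K₂ * (1 + ‖v‖) ^ κ * exp (-θ * ‖v‖ ^ 2) * ((1 + ‖u‖) * exp (-‖u‖ ^ 2 / 4)) := by
  have hQ : 0 ≤ Q := (abs_nonneg _).trans (hq 0)
  rw [gainIntegrand, abs_mul, abs_mul, abs_mul, abs_mul, abs_of_nonneg (by positivity),
    abs_of_pos (exp_pos _), mul_assoc _ |g₁ _|]
  calc _ ≤ (1 + ‖v‖) ^ κ * (1 + ‖u‖) * Q * exp (-‖u‖ ^ 2 / 4) *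
        (K₁ * K₂ * exp (-θ * ‖v‖ ^ 2)) := by
        refine mul_le_mul ?_ (abs_mul_abs_collision_le hθ hg₁ hg₂ u v ω hω) (by positivity)
          (by positivity)
        gcongr
        exacts [rpow_norm_sub_le hκ₀ hκ₁ u v, hq _]
    _ = _ := by ring

end InnerProductSpace

theorem gammaGain_pointwise_gaussian_bound_general
    (κ Q θ : ℝ) (hκ₀ : 0 ≤ κ) (hκ₁ : κ ≤ 1)
    (hθ₀ : 0 < θ) :
    ∃ C : ℝ, ∀ q₀ : ℝ → ℝ, Measurable q₀ →
      (∀ z : ℝ, 0 ≤ q₀ z) → (∀ z : ℝ, q₀ z ≤ Q) →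
      ∀ g₁ g₂ : E3 → ℝ, Measurable g₁ → Measurable g₂ →
      ∀ K₁ K₂ : ℝ,
        (∀ u : E3, |g₁ u| ≤ K₁ * Real.exp (-θ * ‖u‖ ^ 2)) →
        (∀ u : E3, |g₂ u| ≤ K₂ * Real.exp (-θ * ‖u‖ ^ 2)) →
        ∀ v : E3,
          |∫ u : E3, ∫ ω : Metric.sphere (0 : E3) 1,
              ‖v - u‖ ^ κ * q₀ (inner ℝ (‖v - u‖⁻¹ • (v - u)) (ω : E3) : ℝ) *
                Real.exp (-‖u‖ ^ 2 / 4) *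
                g₁ (u + ((inner ℝ (v - u) (ω : E3) : ℝ)) • (ω : E3)) *
                g₂ (v - ((inner ℝ (v - u) (ω : E3) : ℝ)) • (ω : E3))
              ∂((volume : Measure E3).toSphere)|
            ≤ C * K₁ * K₂ * (1 + ‖v‖) ^ κ * Real.exp (-θ * ‖v‖ ^ 2) := by
  refine ⟨(volume : Measure E3).toSphere.real Set.univ * Q *
    ∫ u : E3, (1 + ‖u‖) * exp (-‖u‖ ^ 2 / 4), ?_⟩
  intro q₀ _ hq₀ hqQ g₁ g₂ _ _ K₁ K₂ hg₁ hg₂ v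
  have hq : ∀ z, |q₀ z| ≤ Q := fun z => (abs_of_nonneg (hq₀ z)).trans_le (hqQ z)
  have h := norm_integral_integral_le_of_norm_le (ν := (volume : Measure E3).toSphere)
    (f := fun u ω => gainIntegrand κ q₀ g₁ g₂ v u ω)
    (integrable_one_add_norm_mul_exp_neg_sq_div_four.const_mul
      (Q * K₁ * K₂ * (1 + ‖v‖) ^ κ * exp (-θ * ‖v‖ ^ 2)))
    fun u ω => abs_gainIntegrand_le hκ₀ hκ₁ hθ₀.le hq hg₁ hg₂ v u ω (norm_eq_of_mem_sphere ω)
  rw [integral_const_mul] at h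
  exact h.trans_eq (by ring)

/-- Pointwise Gaussian-decay bound for the gain term `Γ_gain` of the nonlinear
Boltzmann collision operator with hard-potential cutoff kernel (Lemma 2.3(i)).
The inner integral is over the unit sphere `S² ⊂ ℝ³` with its surface measure. -/
theorem gammaGain_pointwise_gaussian_bound
    (κ Q θ : ℝ) (hκ₀ : 0 ≤ κ) (hκ₁ : κ ≤ 1) (hQ : 0 ≤ Q)
    (hθ₀ : 0 < θ) (hθ₁ : θ < 1 / 4) :
    ∃ C : ℝ, ∀ q₀ : ℝ → ℝ, Measurable q₀ →
      (∀ z : ℝ, 0 ≤ q₀ z) → (∀ z : ℝ, q₀ z ≤ Q) →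
      ∀ g₁ g₂ : E3 → ℝ, Measurable g₁ → Measurable g₂ →
      ∀ K₁ K₂ : ℝ,
        (∀ u : E3, |g₁ u| ≤ K₁ * Real.exp (-θ * ‖u‖ ^ 2)) →
        (∀ u : E3, |g₂ u| ≤ K₂ * Real.exp (-θ * ‖u‖ ^ 2)) →
        ∀ v : E3,
          |∫ u : E3, ∫ ω : Metric.sphere (0 : E3) 1,
              ‖v - u‖ ^ κ * q₀ (inner ℝ (‖v - u‖⁻¹ • (v - u)) (ω : E3) : ℝ) *
                Real.exp (-‖u‖ ^ 2 / 4) *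
                g₁ (u + ((inner ℝ (v - u) (ω : E3) : ℝ)) • (ω : E3)) *
                g₂ (v - ((inner ℝ (v - u) (ω : E3) : ℝ)) • (ω : E3))
              ∂((volume : Measure E3).toSphere)|
            ≤ C * K₁ * K₂ * (1 + ‖v‖) ^ κ * Real.exp (-θ * ‖v‖ ^ 2) :=
  gammaGain_pointwise_gaussian_bound_general κ Q θ hκ₀ hκ₁ hθ₀
end
end

section
/- Let 0 < κ ≤ 1, c > 0 and 0 < γ < 1. There exists a constant C > 0 such that for every λ ≥ 0 and every v ∈ ℝ³: ∫_{ℝ³} e^{−c|v−u|² + λ|v−u|} |v−u|^{κ−2} |u₁|^{−γ} du ≤ C e^{C λ²}, where u₁ denotes the first coordinate of u. -/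
noncomputable section

open Real MeasureTheory

/-!
Completing the square, `-c r² + λ r ≤ λ²/(2c) - (c/2) r²`, trades the growth `e^{λ|v-u|}` for
the factor `e^{λ²/(2c)}`. Since `‖w‖ ≥ |w₂|` and `‖w‖ ≥ |w₃|`, the singular factor `‖w‖^{κ-2}`
is at most `|w₂|^{(κ-2)/2} |w₃|^{(κ-2)/2}`, so with `w = v - u` the integrand is dominated by a
product of functions of the single coordinates of `u`, and Fubini factorizes the integral. The
factors in `u₂, u₃` are translates of `e^{-ct²/2} |t|^{(κ-2)/2}`, integrable because
`(κ-2)/2 > -1`. As the Gaussian is at most `1`, the factor `e^{-c(v₁-t)²/2} |t|^{-γ}` in `u₁` is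
at most `|t|^{-γ} 1_{[-1,1]}(t) + e^{-c(v₁-t)²/2}`, whose integral does not depend on `v`.
-/

namespace EuclideanSpace

variable {ι : Type*} [Fintype ι]

theorem rpow_norm_le_rpow_abs_apply_mul {β : ℝ} (hβ : β ≤ 0) (x : EuclideanSpace ℝ ι)
    {i j : ι} (hi : x i ≠ 0) (hj : x j ≠ 0) :
    ‖x‖ ^ β ≤ |x i| ^ (β / 2) * |x j| ^ (β / 2) := by
  have hxi : 0 < |x i| := abs_pos.2 hi
  have hxj : 0 < |x j| := abs_pos.2 hj
  have hx : 0 < ‖x‖ := hxi.trans_le (PiLp.norm_apply_le x i)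
  have hβ' : β / 2 ≤ 0 := by linarith
  calc ‖x‖ ^ β = ‖x‖ ^ (β / 2) * ‖x‖ ^ (β / 2) := by rw [← rpow_add hx, add_halves]
    _ ≤ |x i| ^ (β / 2) * |x j| ^ (β / 2) :=
        mul_le_mul (rpow_le_rpow_of_nonpos hxi (PiLp.norm_apply_le x i) hβ')
          (rpow_le_rpow_of_nonpos hxj (PiLp.norm_apply_le x j) hβ') (by positivity)
          (by positivity)

theorem exp_neg_mul_norm_sq (a : ℝ) (x : EuclideanSpace ℝ ι) :
    exp (-a * ‖x‖ ^ 2) = ∏ i, exp (-a * x i ^ 2) := by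
  rw [real_norm_sq_eq, Finset.mul_sum, exp_sum]

theorem ae_apply_ne (i : ι) (s : ℝ) : ∀ᵐ x : EuclideanSpace ℝ ι, x i ≠ s :=
  (PiLp.volume_preserving_ofLp ι).quasiMeasurePreserving.ae
    (by rw [volume_pi]; exact Measure.ae_eval_ne _ i s)

theorem integral_le_mul_prod_integral {F : EuclideanSpace ℝ ι → ℝ} {f : ι → ℝ → ℝ} (A : ℝ)
    (hF : 0 ≤ F) (hf : ∀ i, Integrable (f i)) (hFf : ∀ᵐ x, F x ≤ A * ∏ i, f i (x i)) :
    ∫ x, F x ≤ A * ∏ i, ∫ t, f i t := by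
  have hvol := volume_preserving_symm_measurableEquiv_toLp ι
  have hint : Integrable fun x : EuclideanSpace ℝ ι => A * ∏ i, f i (x i) :=
    ((hvol.integrable_comp_emb (MeasurableEquiv.measurableEmbedding _)).2
      (Integrable.fintype_prod hf)).const_mul A
  calc ∫ x, F x ≤ ∫ x : EuclideanSpace ℝ ι, A * ∏ i, f i (x i) :=
        integral_mono_of_nonneg (.of_forall hF) hint hFf
    _ = A * ∏ i, ∫ t, f i t := by
        rw [integral_const_mul, ← integral_fintype_prod_volume_eq_prod,
          ← hvol.integral_comp' (g := fun x : ι → ℝ => ∏ i, f i (x i))]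
        rfl

end EuclideanSpace

theorem locallyIntegrable_abs_rpow {β : ℝ} (hβ : -1 < β) :
    LocallyIntegrable fun t : ℝ => |t| ^ β :=
  locallyIntegrable_of_norm_le_rpow (C := 1) (α := -β) (by simp) (by simp; linarith)
    (.of_forall fun t => by simp [abs_rpow_of_nonneg])
    (measurable_id.abs.pow_const β).aestronglyMeasurable

theorem integrable_indicator_Icc_abs_rpow {β : ℝ} (hβ : -1 < β) :
    Integrable ((Set.Icc (-1) 1).indicator fun t : ℝ => |t| ^ β) :=
  ((locallyIntegrable_abs_rpow hβ).integrableOn_isCompact isCompact_Icc).integrable_indicator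
    measurableSet_Icc

theorem mul_abs_rpow_le_indicator_add {β g : ℝ} (hβ : β ≤ 0) (hg₀ : 0 ≤ g) (hg₁ : g ≤ 1)
    (t : ℝ) : g * |t| ^ β ≤ (Set.Icc (-1) 1).indicator (fun t => |t| ^ β) t + g := by
  by_cases ht : |t| ≤ 1
  · rw [Set.indicator_of_mem (Set.mem_Icc.2 (abs_le.1 ht))]
    nlinarith [rpow_nonneg (abs_nonneg t) β]
  · rw [Set.indicator_of_notMem (fun h => ht (abs_le.2 (Set.mem_Icc.1 h))), zero_add]
    exact mul_le_of_le_one_right hg₀ (rpow_le_one_of_one_le_of_nonpos (not_le.1 ht).le hβ)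

section

variable {β : ℝ} {g : ℝ → ℝ}

theorem MeasureTheory.Integrable.mul_abs_rpow (hβ₁ : -1 < β) (hβ₂ : β ≤ 0) (hg : Integrable g)
    (hg₀ : 0 ≤ g) (hg₁ : g ≤ 1) : Integrable fun t => g t * |t| ^ β :=
  ((integrable_indicator_Icc_abs_rpow hβ₁).add hg).mono'
    (hg.aestronglyMeasurable.mul (measurable_id.abs.pow_const β).aestronglyMeasurable)
    (.of_forall fun t => by
      rw [norm_of_nonneg (mul_nonneg (hg₀ t) (by positivity))]
      exact mul_abs_rpow_le_indicator_add hβ₂ (hg₀ t) (hg₁ t) t)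

theorem integral_mul_abs_rpow_le (hβ₁ : -1 < β) (hβ₂ : β ≤ 0) (hg : Integrable g)
    (hg₀ : 0 ≤ g) (hg₁ : g ≤ 1) :
    ∫ t, g t * |t| ^ β ≤ (∫ t in Set.Icc (-1) 1, |t| ^ β) + ∫ t, g t := by
  have hind := integrable_indicator_Icc_abs_rpow hβ₁
  calc ∫ t, g t * |t| ^ β
      ≤ ∫ t, (Set.Icc (-1) 1).indicator (fun t => |t| ^ β) t + g t :=
        integral_mono_of_nonneg (.of_forall fun t => mul_nonneg (hg₀ t) (by positivity))
          (hind.add hg) (.of_forall fun t => mul_abs_rpow_le_indicator_add hβ₂ (hg₀ t) (hg₁ t) t)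
    _ = (∫ t in Set.Icc (-1) 1, |t| ^ β) + ∫ t, g t := by
        rw [integral_add hind hg, integral_indicator measurableSet_Icc]

end

section Gaussian

variable {a β : ℝ}

theorem exp_neg_mul_sq_le_one (ha : 0 ≤ a) (t : ℝ) : exp (-a * t ^ 2) ≤ 1 := by
  rw [exp_le_one_iff]
  nlinarith [sq_nonneg t]

theorem integrable_exp_neg_mul_sq_mul_abs_rpow (ha : 0 < a) (hβ₁ : -1 < β) (hβ₂ : β ≤ 0) :
    Integrable fun t => exp (-a * t ^ 2) * |t| ^ β :=
  (integrable_exp_neg_mul_sq ha).mul_abs_rpow hβ₁ hβ₂ (fun _ => (exp_pos _).le)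
    (fun _ => exp_neg_mul_sq_le_one ha.le _)

theorem integrable_exp_neg_mul_sub_sq_mul_abs_rpow (ha : 0 < a) (hβ₁ : -1 < β) (hβ₂ : β ≤ 0)
    (s : ℝ) : Integrable fun t => exp (-a * (s - t) ^ 2) * |t| ^ β :=
  ((integrable_exp_neg_mul_sq ha).comp_sub_left s).mul_abs_rpow hβ₁ hβ₂
    (fun _ => (exp_pos _).le) (fun _ => exp_neg_mul_sq_le_one ha.le _)

theorem integral_exp_neg_mul_sub_sq_mul_abs_rpow_le (ha : 0 < a) (hβ₁ : -1 < β) (hβ₂ : β ≤ 0)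
    (s : ℝ) :
    ∫ t, exp (-a * (s - t) ^ 2) * |t| ^ β ≤ (∫ t in Set.Icc (-1) 1, |t| ^ β) + √(π / a) := by
  have h := integral_mul_abs_rpow_le hβ₁ hβ₂ ((integrable_exp_neg_mul_sq ha).comp_sub_left s)
    (fun _ => (exp_pos _).le) (fun _ => exp_neg_mul_sq_le_one ha.le _)
  rwa [integral_sub_left_eq_self (fun t => exp (-a * t ^ 2)), integral_gaussian] at h

end Gaussian

theorem exp_neg_mul_sq_add_mul_le {c : ℝ} (hc : 0 < c) (lam r : ℝ) :
    exp (-c * r ^ 2 + lam * r) ≤ exp ((2 * c)⁻¹ * lam ^ 2) * exp (-(c / 2) * r ^ 2) := by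
  rw [← exp_add, exp_le_exp, ← sub_nonneg]
  have : (2 * c)⁻¹ * lam ^ 2 + -(c / 2) * r ^ 2 - (-c * r ^ 2 + lam * r)
      = (2 * c)⁻¹ * (lam - c * r) ^ 2 := by field_simp; ring
  rw [this]
  positivity

theorem exists_pos_mul_exp_mul_sq_le (A B : ℝ) :
    ∃ C > 0, ∀ x : ℝ, A * exp (B * x ^ 2) ≤ C * exp (C * x ^ 2) := by
  refine ⟨|A| + |B| + 1, by positivity, fun x => ?_⟩
  have hA : A ≤ |A| + |B| + 1 := by linarith [le_abs_self A, abs_nonneg B]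
  have hB : B ≤ |A| + |B| + 1 := by linarith [le_abs_self B, abs_nonneg A]
  gcongr

/-- Index `i : Fin 3` is the coordinate `u_{i+1}` of the header. -/
def kernelMajorant (a α γ : ℝ) (v : E3) : Fin 3 → ℝ → ℝ
  | 0, t => exp (-a * (v 0 - t) ^ 2) * |t| ^ (-γ)
  | 1, t => exp (-a * (v 1 - t) ^ 2) * |v 1 - t| ^ α
  | 2, t => exp (-a * (v 2 - t) ^ 2) * |v 2 - t| ^ α

section kernelMajorant

variable {a α γ : ℝ}

theorem kernel_le_kernelMajorant {c κ : ℝ} (hc : 0 < c) (hκ : κ ≤ 2) (lam : ℝ) (v u : E3)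
    (h₁ : u 1 ≠ v 1) (h₂ : u 2 ≠ v 2) :
    exp (-c * ‖v - u‖ ^ 2 + lam * ‖v - u‖) * ‖v - u‖ ^ (κ - 2) * |u 0| ^ (-γ) ≤
      exp ((2 * c)⁻¹ * lam ^ 2) * ∏ i, kernelMajorant (c / 2) ((κ - 2) / 2) γ v i (u i) := by
  have hexp := exp_neg_mul_sq_add_mul_le hc lam ‖v - u‖
  have hpow := EuclideanSpace.rpow_norm_le_rpow_abs_apply_mul (by linarith : κ - 2 ≤ 0) (v - u)
    (i := 1) (j := 2) (by simpa [sub_eq_zero] using h₁.symm) (by simpa [sub_eq_zero] using h₂.symm)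
  rw [EuclideanSpace.exp_neg_mul_norm_sq, Fin.prod_univ_three] at hexp
  simp only [PiLp.sub_apply] at hexp hpow
  simp only [kernelMajorant, Fin.prod_univ_three]
  calc _ ≤ exp ((2 * c)⁻¹ * lam ^ 2) * (exp (-(c / 2) * (v 0 - u 0) ^ 2) *
          exp (-(c / 2) * (v 1 - u 1) ^ 2) * exp (-(c / 2) * (v 2 - u 2) ^ 2)) *
        (|v 1 - u 1| ^ ((κ - 2) / 2) * |v 2 - u 2| ^ ((κ - 2) / 2)) * |u 0| ^ (-γ) := by
        gcongr
    _ = _ := by ring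

theorem integrable_kernelMajorant (ha : 0 < a) (hα₁ : -1 < α) (hα₂ : α ≤ 0) (hγ₁ : 0 < γ)
    (hγ₂ : γ < 1) (v : E3) (i : Fin 3) : Integrable (kernelMajorant a α γ v i) := by
  match i with
  | 0 => exact integrable_exp_neg_mul_sub_sq_mul_abs_rpow ha (by linarith) (by linarith) (v 0)
  | 1 => exact (integrable_exp_neg_mul_sq_mul_abs_rpow ha hα₁ hα₂).comp_sub_left (v 1)
  | 2 => exact (integrable_exp_neg_mul_sq_mul_abs_rpow ha hα₁ hα₂).comp_sub_left (v 2)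

theorem prod_integral_kernelMajorant_le (ha : 0 < a) (hγ₁ : 0 < γ) (hγ₂ : γ < 1)
    (v : E3) :
    ∏ i, ∫ t, kernelMajorant a α γ v i t ≤
      ((∫ t in Set.Icc (-1) 1, |t| ^ (-γ)) + √(π / a)) *
        (∫ t, exp (-a * t ^ 2) * |t| ^ α) ^ 2 := by
  have hJ (s : ℝ) : ∫ t, exp (-a * (s - t) ^ 2) * |s - t| ^ α = ∫ t, exp (-a * t ^ 2) * |t| ^ α :=
    integral_sub_left_eq_self (fun t => exp (-a * t ^ 2) * |t| ^ α) volume s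
  simp only [Fin.prod_univ_three, kernelMajorant, hJ, mul_assoc, ← sq]
  gcongr
  exact integral_exp_neg_mul_sub_sq_mul_abs_rpow_le ha (by linarith) (by linarith) (v 0)

end kernelMajorant

/-- The computational core of the weighted kernel estimate (Kd) used in the
weighted `W^{1,p}` estimates: with `u₁ = u·n(x)` the normal component, the
weighted kernel integral is bounded by `C e^{Cλ²}`. -/
theorem weighted_kernel_integral_bound
    (κ c γ : ℝ) (hκ₁ : 0 < κ) (hκ₂ : κ ≤ 1) (hc : 0 < c)
    (hγ₁ : 0 < γ) (hγ₂ : γ < 1) :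
    ∃ C > 0, ∀ lam : ℝ, 0 ≤ lam → ∀ v : E3,
      (∫ u : E3,
          Real.exp (-c * ‖v - u‖ ^ 2 + lam * ‖v - u‖) * ‖v - u‖ ^ (κ - 2) *
            |u 0| ^ (-γ))
        ≤ C * Real.exp (C * lam ^ 2) := by
  have hα₁ : -1 < (κ - 2) / 2 := by linarith
  have hα₂ : (κ - 2) / 2 ≤ 0 := by linarith
  obtain ⟨C, hC, hCbound⟩ := exists_pos_mul_exp_mul_sq_le
    (((∫ t in Set.Icc (-1) 1, |t| ^ (-γ)) + √(π / (c / 2))) *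
      (∫ t, exp (-(c / 2) * t ^ 2) * |t| ^ ((κ - 2) / 2)) ^ 2) (2 * c)⁻¹
  refine ⟨C, hC, fun lam _ v => ?_⟩
  calc _ ≤ exp ((2 * c)⁻¹ * lam ^ 2) * ∏ i, ∫ t, kernelMajorant (c / 2) ((κ - 2) / 2) γ v i t :=
        EuclideanSpace.integral_le_mul_prod_integral _ (fun u => by positivity)
          (integrable_kernelMajorant (by positivity) hα₁ hα₂ hγ₁ hγ₂ v)
          (by filter_upwards [EuclideanSpace.ae_apply_ne 1 (v 1),
                EuclideanSpace.ae_apply_ne 2 (v 2)] with u h₁ h₂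
              using kernel_le_kernelMajorant hc (by linarith) lam v u h₁ h₂)
    _ ≤ _ := by
        rw [mul_comm]
        gcongr
        exact prod_integral_kernelMajorant_le (by positivity) hγ₁ hγ₂ v
    _ ≤ C * exp (C * lam ^ 2) := hCbound lam
end
end

section
/- Define ⟨w⟩ := √(1+|w|²) for w ∈ ℝ³. For all constants C₁ > 0 and C₂ > 0 and every ϖ ≥ 2C₁, there exist constants A > 0 and B > 0 such that for all real numbers s, t with 0 ≤ s ≤ t and all u, v ∈ ℝ³: ϖ⟨u⟩s − ϖ⟨v⟩t + C₁|v|(t−s) − C₂|v−u|² ≤ −(ϖ/2)⟨v⟩(t−s) + A(s + s²) − B|v−u|². -/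
/-! Since `⟨·⟩` is 1-Lipschitz, `ϖ⟨u⟩s − ϖ⟨v⟩s ≤ ϖ s |v − u|`, and Young's inequality splits
`ϖ s |v − u|` into `(ϖ² / 2C₂) s²` plus half of the Gaussian `C₂|v − u|²`. The growth term
`C₁|v|(t − s)` is absorbed by half of the decay `ϖ⟨v⟩(t − s)` because `C₁ ≤ ϖ/2` and
`|v| ≤ ⟨v⟩`. -/

noncomputable section

open Real

theorem abs_le_sqrt_one_add_sq (a : ℝ) : |a| ≤ √(1 + a ^ 2) :=
  Real.abs_le_sqrt (le_add_of_nonneg_left zero_le_one)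

theorem sqrt_one_add_sq_sub_le (a b : ℝ) : √(1 + a ^ 2) - √(1 + b ^ 2) ≤ |a - b| := by
  have hb := abs_le_sqrt_one_add_sq b
  have hb_sq : √(1 + b ^ 2) ^ 2 = 1 + b ^ 2 := Real.sq_sqrt (by positivity)
  rw [sub_le_iff_le_add, Real.sqrt_le_left (by positivity)]
  -- `a² − b² − (a − b)² = 2b(a − b) ≤ 2|a − b| √(1 + b²)`
  nlinarith [abs_mul_abs_self (a - b), abs_mul b (a - b), le_abs_self (b * (a - b)),
    mul_le_mul_of_nonneg_left hb (abs_nonneg (a - b))]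

theorem sqrt_one_add_norm_sq_sub_le {E : Type*} [SeminormedAddCommGroup E] (u v : E) :
    √(1 + ‖u‖ ^ 2) - √(1 + ‖v‖ ^ 2) ≤ ‖u - v‖ :=
  (sqrt_one_add_sq_sub_le _ _).trans (abs_norm_sub_norm_le u v)

theorem norm_le_sqrt_one_add_norm_sq {E : Type*} [SeminormedAddCommGroup E] (v : E) :
    ‖v‖ ≤ √(1 + ‖v‖ ^ 2) :=
  (le_abs_self _).trans (abs_le_sqrt_one_add_sq _)

/-- The exponent inequality by which the strong decay factor `e^{−ϖ⟨v⟩t}` with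
`ϖ ≥ 2C₁` absorbs the geometric growth `e^{C₁|v|(t−s)}`, at the price of a
factor `e^{A(s+s²)}` and a Gaussian in `v−u`.  Here `⟨w⟩ = √(1+|w|²)`. -/
theorem exponent_absorption
    (C₁ C₂ : ℝ) (hC₁ : 0 < C₁) (hC₂ : 0 < C₂) (ϖ : ℝ) (hϖ : 2 * C₁ ≤ ϖ) :
    ∃ A > 0, ∃ B > 0, ∀ s t : ℝ, 0 ≤ s → s ≤ t → ∀ u v : E3,
      ϖ * Real.sqrt (1 + ‖u‖ ^ 2) * s - ϖ * Real.sqrt (1 + ‖v‖ ^ 2) * t +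
          C₁ * ‖v‖ * (t - s) - C₂ * ‖v - u‖ ^ 2
        ≤ -(ϖ / 2) * Real.sqrt (1 + ‖v‖ ^ 2) * (t - s) + A * (s + s ^ 2) -
            B * ‖v - u‖ ^ 2 := by
  have hϖ₀ : 0 < ϖ := by linarith
  refine ⟨ϖ ^ 2 / (2 * C₂), by positivity, C₂ / 2, by positivity, fun s t hs hst u v => ?_⟩
  have hlipschitz : ϖ * s * (√(1 + ‖u‖ ^ 2) - √(1 + ‖v‖ ^ 2)) ≤ ϖ * s * ‖v - u‖ := by
    gcongr
    simpa only [norm_sub_rev] using sqrt_one_add_norm_sq_sub_le u v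
  have hyoung : 2 * ‖v - u‖ * (ϖ * s) ≤ C₂ * ‖v - u‖ ^ 2 + C₂⁻¹ * (ϖ * s) ^ 2 :=
    two_mul_le_add_mul_sq hC₂
  have hgrowth : C₁ * ‖v‖ * (t - s) ≤ ϖ / 2 * √(1 + ‖v‖ ^ 2) * (t - s) := by
    gcongr
    · linarith
    · exact norm_le_sqrt_one_add_norm_sq v
  have hlinear : 0 ≤ ϖ ^ 2 / (2 * C₂) * s := by positivity
  have hquadratic : C₂⁻¹ * (ϖ * s) ^ 2 = 2 * (ϖ ^ 2 / (2 * C₂) * s ^ 2) := by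
    field_simp
  linear_combination hlipschitz + hyoung / 2 + hgrowth + hlinear + hquadratic / 2
end
end

section
/- Let k ≥ 1 be a natural number, let (a_m)_{m≥0} be a sequence of nonnegative real numbers, and let D ≥ 0. For m ≥ 0 define A_m := max{ a_i : max(m−k+1, 0) ≤ i ≤ m }. If a_{m+1} ≤ (1/8) A_m + D for every m ≥ 0, then there exists N such that A_m ≤ (1/8) A_0 + (8/7)² D for all m ≥ N. -/
/-!
With `M = max (A 0) (8/7 * D)` one has `M/8 + D ≤ M`, so by strong induction no term of the
sequence exceeds `M`. Once `m ≥ k` the window `[m + 1 - k, m]` no longer contains `0`, so each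
of its terms is controlled by the recursion: `A m ≤ M/8 + D ≤ A 0 / 8 + (8/7) D`.
-/

open Set

section WindowMax

variable {a : ℕ → ℝ} {k : ℕ}

theorem le_sSup_image_Icc_sub (hk : 1 ≤ k) (m : ℕ) : a m ≤ sSup (a '' Icc (m + 1 - k) m) :=
  le_csSup ((finite_Icc _ _).image a).bddAbove (mem_image_of_mem a ⟨by omega, le_rfl⟩)

theorem sSup_image_Icc_sub_le {m : ℕ} {C : ℝ} (hk : 1 ≤ k)
    (h : ∀ i ∈ Icc (m + 1 - k) m, a i ≤ C) : sSup (a '' Icc (m + 1 - k) m) ≤ C :=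
  csSup_le ((nonempty_Icc.2 (by omega)).image a) (forall_mem_image.2 h)

variable {c D M : ℝ}

theorem forall_le_of_le_mul_sSup_add (hk : 1 ≤ k) (hc : 0 ≤ c)
    (hrec : ∀ m, a (m + 1) ≤ c * sSup (a '' Icc (m + 1 - k) m) + D)
    (h0 : a 0 ≤ M) (hfix : c * M + D ≤ M) (m : ℕ) : a m ≤ M := by
  induction m using Nat.strong_induction_on with
  | _ m ih =>
    match m, ih with
    | 0, _ => exact h0
    | j + 1, ih =>
      have hwindow : sSup (a '' Icc (j + 1 - k) j) ≤ M :=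
        sSup_image_Icc_sub_le hk fun i hi => ih i (Nat.lt_succ_of_le hi.2)
      calc a (j + 1) ≤ c * sSup (a '' Icc (j + 1 - k) j) + D := hrec j
        _ ≤ c * M + D := by gcongr
        _ ≤ M := hfix

theorem sSup_image_Icc_sub_le_mul_add (hk : 1 ≤ k) (hc : 0 ≤ c)
    (hrec : ∀ m, a (m + 1) ≤ c * sSup (a '' Icc (m + 1 - k) m) + D)
    (hM : ∀ m, a m ≤ M) {m : ℕ} (hm : k ≤ m) :
    sSup (a '' Icc (m + 1 - k) m) ≤ c * M + D := by
  refine sSup_image_Icc_sub_le hk fun i hi => ?_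
  obtain ⟨j, rfl⟩ : ∃ j, i = j + 1 := Nat.exists_eq_add_one.2 (by grind)
  calc a (j + 1) ≤ c * sSup (a '' Icc (j + 1 - k) j) + D := hrec j
    _ ≤ c * M + D := by gcongr; exact sSup_image_Icc_sub_le hk fun i _ => hM i

end WindowMax

/-- The discrete iteration lemma (aAD): if `A m` is the running maximum of the
last `k` terms of a nonnegative sequence `a` (clipped at index `0`) and
`a (m+1) ≤ (1/8) A m + D`, then eventually `A m ≤ (1/8) A 0 + (8/7)² D`. -/
theorem iteration_lemma
    (k : ℕ) (hk : 1 ≤ k) (a : ℕ → ℝ) (ha : ∀ m, 0 ≤ a m)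
    (D : ℝ) (hD : 0 ≤ D)
    (A : ℕ → ℝ) (hA : ∀ m, A m = sSup (a '' Set.Icc (m + 1 - k) m))
    (hrec : ∀ m, a (m + 1) ≤ (1 / 8) * A m + D) :
    ∃ N : ℕ, ∀ m ≥ N, A m ≤ (1 / 8) * A 0 + (8 / 7) ^ 2 * D := by
  have hrec' : ∀ m, a (m + 1) ≤ 1 / 8 * sSup (a '' Icc (m + 1 - k) m) + D :=
    fun m => hA m ▸ hrec m
  have ha0 : a 0 ≤ A 0 := hA 0 ▸ le_sSup_image_Icc_sub hk 0
  set M := max (A 0) (8 / 7 * D)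
  have hM : ∀ m, a m ≤ M :=
    forall_le_of_le_mul_sSup_add hk (by norm_num) hrec' (ha0.trans (le_max_left _ _))
      (by linarith [le_max_right (A 0) (8 / 7 * D)])
  have hMle : M ≤ A 0 + 8 / 7 * D := max_le_add_of_nonneg ((ha 0).trans ha0) (by positivity)
  refine ⟨k, fun m hm => ?_⟩
  calc A m = sSup (a '' Icc (m + 1 - k) m) := hA m
    _ ≤ 1 / 8 * M + D := sSup_image_Icc_sub_le_mul_add hk (by norm_num) hrec' hM hm
    _ ≤ _ := by linarith
end

section
/- Let M, r, a ∈ ℝ with a ≠ 0, and let J be the 7×7 real matrix with rows (in order): (1, 0, Mr/a, Mr/a, M/a², Mr/a², Mr/a²); (0, 0, 0, 0, 0, 0, 0); (0, 0, 1+Mr, Mr, M/a, Mr/a, Mr/a); (0, 0, Mr, 1+Mr, M/a, Mr/a, Mr/a); (0, 0, M a r², M a r², 1+Mr, Mr², Mr²); (0, 0, M a r, M a r, M, 1+Mr, Mr); (0, 0, M a r, M a r, M, Mr, 1+Mr). Then the characteristic polynomial of J equals X·(X−1)⁵·(X−(1+5Mr)). In particular the eigenvalues of J are 0, 1 (with multiplicity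 5) and 1+5Mr. -/
noncomputable section

open Polynomial

open Matrix in
lemma eval_charpoly_aux {n : ℕ} (D : Matrix (Fin n) (Fin n) ℝ) (x : ℝ) :
    D.charpoly.eval x = (x • (1 : Matrix (Fin n) (Fin n) ℝ) - D).det := by
  rw [Matrix.charpoly, ← coe_evalRingHom, RingHom.map_det]
  congr 1
  ext i j
  by_cases h : i = j <;>
    simp [charmatrix_apply, Matrix.diagonal, Matrix.one_apply, h, Matrix.map_apply]

open Matrix in
lemma rank_one_det {n : ℕ} (c : ℝ) (hc : c ≠ 0) (u v : Fin n → ℝ)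
    (E : Matrix (Fin n) (Fin n) ℝ)
    (hE : E = Matrix.of fun i j => (if i = j then c else 0) + u i * v j) :
    E.det = c ^ n * (1 + c⁻¹ * ∑ i, v i * u i) := by
  have h2 : E = c • (1 + Matrix.replicateCol Unit (fun i => c⁻¹ * u i) * Matrix.replicateRow Unit v) := by
    subst hE
    ext i j
    by_cases h : i = j <;> simp [Matrix.mul_apply, Matrix.one_apply, h] <;>
      (try field_simp) <;> (try ring)
  rw [h2, Matrix.det_smul, Matrix.det_one_add_replicateCol_mul_replicateRow]
  have : v ⬝ᵥ (fun i => c⁻¹ * u i) = c⁻¹ * ∑ i, v i * u i := by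
    rw [dotProduct, Finset.mul_sum]
    exact Finset.sum_congr rfl fun i _ => by ring
  rw [this]
  simp


/-- Characteristic polynomial and eigenvalues (with algebraic multiplicity) of
the matrix `J(r)` dominating the Jacobian of one specular bounce, with `a = |v|`
the speed and `r = |v_⊥|/|v|` the grazing parameter (Step 5 of the proof of the
trajectory-derivative theorem). -/
theorem bounce_jacobian_charpoly
    (M r a : ℝ) (ha : a ≠ 0)
    (J : Matrix (Fin 7) (Fin 7) ℝ)
    (hJ : J = !![1, 0, M * r / a, M * r / a, M / a ^ 2, M * r / a ^ 2, M * r / a ^ 2;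
                 0, 0, 0, 0, 0, 0, 0;
                 0, 0, 1 + M * r, M * r, M / a, M * r / a, M * r / a;
                 0, 0, M * r, 1 + M * r, M / a, M * r / a, M * r / a;
                 0, 0, M * a * r ^ 2, M * a * r ^ 2, 1 + M * r, M * r ^ 2, M * r ^ 2;
                 0, 0, M * a * r, M * a * r, M, 1 + M * r, M * r;
                 0, 0, M * a * r, M * a * r, M, M * r, 1 + M * r]) :
    J.charpoly = X * (X - 1) ^ 5 * (X - C (1 + 5 * M * r)) ∧
      J.charpoly.roots = {0, 1, 1, 1, 1, 1, 1 + 5 * M * r} := by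
  have key : J.charpoly = X * (X - 1) ^ 5 * (X - C (1 + 5 * M * r)) := by
    set A : Matrix (Fin 2) (Fin 2) ℝ := !![1, 0; 0, 0] with hA
    set B : Matrix (Fin 2) (Fin 5) ℝ :=
      !![M * r / a, M * r / a, M / a ^ 2, M * r / a ^ 2, M * r / a ^ 2;
         0, 0, 0, 0, 0] with hB
    set D : Matrix (Fin 5) (Fin 5) ℝ :=
      !![1 + M * r, M * r, M / a, M * r / a, M * r / a;
         M * r, 1 + M * r, M / a, M * r / a, M * r / a;
         M * a * r ^ 2, M * a * r ^ 2, 1 + M * r, M * r ^ 2, M * r ^ 2;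
         M * a * r, M * a * r, M, 1 + M * r, M * r;
         M * a * r, M * a * r, M, M * r, 1 + M * r] with hD
    have hre : J = (Matrix.reindex finSumFinEquiv finSumFinEquiv) (Matrix.fromBlocks A B 0 D) := by
      subst hJ
      ext i j
      fin_cases i <;> fin_cases j <;> rfl
    have h1 : J.charpoly = A.charpoly * D.charpoly := by
      rw [hre, Matrix.charpoly_reindex, Matrix.charpoly_fromBlocks_zero₂₁]
    have hcA : A.charpoly = (X - 1) * X := by
      apply Polynomial.funext
      intro x
      rw [eval_charpoly_aux]
      rw [show x • (1 : Matrix (Fin 2) (Fin 2) ℝ) - A = !![x - 1, 0; 0, x] from by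
        rw [hA]; ext i j; fin_cases i <;> fin_cases j <;> simp [Matrix.one_apply]]
      rw [Matrix.det_fin_two]
      simp
      try ring
    have hcD : D.charpoly = (X - 1) ^ 4 * (X - C (1 + 5 * M * r)) := by
      apply Polynomial.eq_of_infinite_eval_eq
      refine ((Set.finite_singleton (1 : ℝ)).infinite_compl).mono ?_
      intro x hx
      simp only [Set.mem_compl_iff, Set.mem_singleton_iff] at hx
      have hx1 : x - 1 ≠ 0 := sub_ne_zero.mpr hx
      simp only [Set.mem_setOf_eq]
      rw [eval_charpoly_aux,
        rank_one_det (x - 1) hx1 (![-1, -1, -(a * r), -a, -a])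
          (![M * r, M * r, M / a, M * r / a, M * r / a]) _ ?_]
      · simp [Fin.sum_univ_five]
        field_simp
        ring
      · rw [hD]
        ext i j
        fin_cases i <;> fin_cases j <;>
          (try simp [Matrix.one_apply, Matrix.vecHead, Matrix.vecTail]) <;>
          (try field_simp) <;> (try ring)
    rw [h1, hcA, hcD]
    ring
  refine ⟨key, ?_⟩
  rw [key]
  have h1 : (X - 1 : ℝ[X]) = X - C 1 := by norm_num
  have hX : (X : ℝ[X]) ≠ 0 := X_ne_zero
  have h2 : (X - 1 : ℝ[X]) ≠ 0 := by rw [h1]; exact X_sub_C_ne_zero 1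
  have h3 : (X - C (1 + 5 * M * r) : ℝ[X]) ≠ 0 := X_sub_C_ne_zero _
  rw [roots_mul (mul_ne_zero (mul_ne_zero hX (pow_ne_zero 5 h2)) h3),
    roots_mul (mul_ne_zero hX (pow_ne_zero 5 h2)), roots_X, roots_pow, h1,
    roots_X_sub_C, roots_X_sub_C]
  rfl
end
end
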